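/- Let 𝒜, 𝔅 be commutative Banach algebras, R : 𝔅 → 𝒜 a surjective continuous algebra homomorphism whose adjoint R* : 𝒜* → 𝔅* is bounded below (i.e. an isomorphism onto its range). If T ∈ 𝒜* is almost periodic, then R*(T) is almost periodic in 𝔅*. Conversely, if R admits a bounded right inverse map on bounded sets (every u ∈ 𝒜 with ‖u‖ ≤ 1 lifts to v ∈ 𝔅 with ‖v‖ ≤ C+1 and R(v) = u), then R*(T) ∈ AP(𝔅) implies T ∈ AP(𝒜). -/

import Mathlib

/-!
Restriction along `R` intertwines the module actions: `(R v · T) ∘ R = v · (T ∘ R)`. Hence the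
unit-ball orbit of `T ∘ R` is the image under the bounded map `R*` of part of the `‖R‖`-ball orbit
of `T`, which is totally bounded when `T` is almost periodic. Conversely, the lifting property puts
`R*` of the unit-ball orbit of `T` inside the `(C + 1)`-ball orbit of `T ∘ R`, and since `R*` is
bounded below it reflects total boundedness. Duals are complete, so total boundedness of an orbit
is the same as relative compactness.
-/

open NormedSpace

/-- The dual module action: `⟨u·T, v⟩ = ⟨T, v * u⟩`. -/
noncomputable def dualAct {A : Type*} [NormedCommRing A] [NormedAlgebra ℂ A]
    (u : A) (T : StrongDual ℂ A) : StrongDual ℂ A :=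
  T.comp ((ContinuousLinearMap.mul ℂ A).flip u)

/-- `T` is almost periodic. -/
def IsAP {A : Type*} [NormedCommRing A] [NormedAlgebra ℂ A] (T : StrongDual ℂ A) : Prop :=
  IsCompact (closure {S : StrongDual ℂ A | ∃ u : A, ‖u‖ ≤ 1 ∧ S = dualAct u T})

theorem isCompact_closure_iff_totallyBounded {α : Type*} [UniformSpace α] [CompleteSpace α]
    {s : Set α} : IsCompact (closure s) ↔ TotallyBounded s := by
  rw [isCompact_iff_totallyBounded_isComplete, totallyBounded_closure]
  exact and_iff_left isClosed_closure.isComplete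

theorem ContinuousLinearMap.isUniformInducing_of_mul_norm_le {𝕜 E F : Type*} [NormedField 𝕜]
    [NormedAddCommGroup E] [NormedAddCommGroup F] [NormedSpace 𝕜 E] [NormedSpace 𝕜 F]
    (f : E →L[𝕜] F) {c : ℝ} (hc : 0 < c) (hf : ∀ x, c * ‖x‖ ≤ ‖f x‖) :
    IsUniformInducing f := by
  refine (f.isUniformEmbedding_of_bound (K := c⁻¹.toNNReal) fun x => ?_).isUniformInducing
  rw [Real.coe_toNNReal _ (inv_nonneg.2 hc.le), inv_mul_eq_div, le_div_iff₀ hc, mul_comm]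
  exact hf x

section DualOrbit

variable {A B : Type*} [NormedCommRing A] [NormedAlgebra ℂ A]
  [NormedCommRing B] [NormedAlgebra ℂ B]

@[simp]
theorem dualAct_apply (u : A) (T : StrongDual ℂ A) (w : A) : dualAct u T w = T (w * u) := rfl

theorem dualAct_smul (m : ℂ) (u : A) (T : StrongDual ℂ A) :
    dualAct (m • u) T = m • dualAct u T := by
  ext w
  simp

theorem dualAct_comp_of_map_mul {R : B →L[ℂ] A} (hmul : ∀ a b : B, R (a * b) = R a * R b)
    (v : B) (T : StrongDual ℂ A) : (dualAct (R v) T).comp R = dualAct v (T.comp R) := by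
  ext w
  simp [hmul]

def dualOrbit (T : StrongDual ℂ A) (r : ℝ) : Set (StrongDual ℂ A) :=
  {S | ∃ u : A, ‖u‖ ≤ r ∧ S = dualAct u T}

theorem isAP_iff_totallyBounded {T : StrongDual ℂ A} : IsAP T ↔ TotallyBounded (dualOrbit T 1) :=
  isCompact_closure_iff_totallyBounded

theorem dualOrbit_mono (T : StrongDual ℂ A) : Monotone (dualOrbit T) := by
  rintro r s hrs S ⟨u, hu, rfl⟩
  exact ⟨u, hu.trans hrs, rfl⟩

theorem dualOrbit_subset_image_smul (T : StrongDual ℂ A) {r : ℝ} (hr : 0 < r) :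
    dualOrbit T r ⊆ ((r : ℂ) • ·) '' dualOrbit T 1 := by
  have hr' : (r : ℂ) ≠ 0 := Complex.ofReal_ne_zero.2 hr.ne'
  rintro S ⟨u, hu, rfl⟩
  refine ⟨dualAct ((r : ℂ)⁻¹ • u) T, ⟨(r : ℂ)⁻¹ • u, ?_, rfl⟩, ?_⟩
  · rw [norm_smul, norm_inv, Complex.norm_real, Real.norm_of_nonneg hr.le, inv_mul_le_iff₀ hr,
      mul_one]
    exact hu
  · beta_reduce
    rw [← dualAct_smul, smul_inv_smul₀ hr']

theorem TotallyBounded.dualOrbit {T : StrongDual ℂ A} (hT : TotallyBounded (dualOrbit T 1))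
    (r : ℝ) : TotallyBounded (dualOrbit T r) :=
  have hpos : 0 < max r 1 := lt_max_of_lt_right one_pos
  ((hT.image (uniformContinuous_const_smul _)).subset
    (dualOrbit_subset_image_smul T hpos)).subset (dualOrbit_mono T (le_max_left r 1))

theorem dualOrbit_comp_subset_image {R : B →L[ℂ] A}
    (hmul : ∀ a b : B, R (a * b) = R a * R b) (T : StrongDual ℂ A) (r : ℝ) :
    dualOrbit (T.comp R) r ⊆ (fun S : StrongDual ℂ A => S.comp R) '' dualOrbit T (‖R‖ * r) := by
  rintro S ⟨v, hv, rfl⟩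
  refine ⟨dualAct (R v) T, ⟨R v, ?_, rfl⟩, dualAct_comp_of_map_mul hmul v T⟩
  exact (R.le_opNorm v).trans (mul_le_mul_of_nonneg_left hv (norm_nonneg R))

theorem image_dualOrbit_subset_of_lift {R : B →L[ℂ] A}
    (hmul : ∀ a b : B, R (a * b) = R a * R b) {r s : ℝ}
    (hlift : ∀ u : A, ‖u‖ ≤ r → ∃ v : B, R v = u ∧ ‖v‖ ≤ s) (T : StrongDual ℂ A) :
    (fun S : StrongDual ℂ A => S.comp R) '' dualOrbit T r ⊆ dualOrbit (T.comp R) s := by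
  rintro _ ⟨_, ⟨u, hu, rfl⟩, rfl⟩
  obtain ⟨v, rfl, hv⟩ := hlift u hu
  exact ⟨v, hv, dualAct_comp_of_map_mul hmul v T⟩

end DualOrbit

theorem AP_transfer_along_quotient_general
    (A B : Type*) [NormedCommRing A] [NormedAlgebra ℂ A]
    [NormedCommRing B] [NormedAlgebra ℂ B]
    (R : B →L[ℂ] A) (hmul : ∀ a b : B, R (a * b) = R a * R b)
    (hbelow : ∃ c : ℝ, 0 < c ∧ ∀ T : StrongDual ℂ A, c * ‖T‖ ≤ ‖T.comp R‖) :
    (∀ T : StrongDual ℂ A, IsAP T → IsAP (T.comp R)) ∧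
      (∀ C : ℝ, (∀ u : A, ‖u‖ ≤ 1 → ∃ v : B, R v = u ∧ ‖v‖ ≤ C + 1) →
        ∀ T : StrongDual ℂ A, IsAP (T.comp R) → IsAP T) := by
  set restrict : StrongDual ℂ A →L[ℂ] StrongDual ℂ B := ContinuousLinearMap.precomp ℂ R
  refine ⟨fun T hT => ?_, fun C hlift T hTR => ?_⟩
  · rw [isAP_iff_totallyBounded] at hT ⊢
    exact ((hT.dualOrbit _).image restrict.uniformContinuous).subset
      (dualOrbit_comp_subset_image hmul T 1)
  · obtain ⟨c, hc, hbound⟩ := hbelow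
    rw [isAP_iff_totallyBounded] at hTR ⊢
    rw [← totallyBounded_image_iff (restrict.isUniformInducing_of_mul_norm_le hc hbound)]
    exact (hTR.dualOrbit (C + 1)).subset (image_dualOrbit_subset_of_lift hmul hlift T)

/-- for a surjective continuous algebra homomorphism `R : B → A` whose adjoint
`R*` is bounded below, `T ∈ AP(A)` implies `R*(T) ∈ AP(B)`; conversely, if every `u` in the
closed unit ball of `A` lifts to `v ∈ B` with `‖v‖ ≤ C + 1` and `R v = u`, then
`R*(T) ∈ AP(B)` implies `T ∈ AP(A)`. -/
theorem AP_transfer_along_quotient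
    (A B : Type*) [NormedCommRing A] [NormedAlgebra ℂ A] [CompleteSpace A]
    [NormedCommRing B] [NormedAlgebra ℂ B] [CompleteSpace B]
    (R : B →L[ℂ] A) (hmul : ∀ a b : B, R (a * b) = R a * R b)
    (hsurj : Function.Surjective R)
    (hbelow : ∃ c : ℝ, 0 < c ∧ ∀ T : StrongDual ℂ A, c * ‖T‖ ≤ ‖T.comp R‖) :
    (∀ T : StrongDual ℂ A, IsAP T → IsAP (T.comp R)) ∧
      (∀ C : ℝ, (∀ u : A, ‖u‖ ≤ 1 → ∃ v : B, R v = u ∧ ‖v‖ ≤ C + 1) →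
        ∀ T : StrongDual ℂ A, IsAP (T.comp R) → IsAP T) :=
  AP_transfer_along_quotient_general A B R hmul hbelow
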